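/- The map [P,Q] from decorated trees to synchronized intervals is injective: if P(T1) = P(T2) and Q(T1) = Q(T2) for decorated trees T1, T2, then T1 = T2. -/

import Mathlib

/-- A Dyck word: `true` is an up step `u`, `false` is a down step `d`. -/
def IsDyck (w : List Bool) : Prop :=
  w.count true = w.count false ∧ ∀ k, (w.take k).count false ≤ (w.take k).count true

/-- Position (0-based index) of the `i`-th (1-based) up step of `w`. -/
noncomputable def upPos (w : List Bool) (i : ℕ) : ℕ :=
  sInf {j | w.getD j false = true ∧ (w.take (j + 1)).count true = i}

/-- Position of the down step matching the up step at position `k`: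
the first later down step such that the letters strictly in between form a Dyck word. -/
noncomputable def matchIdx (w : List Bool) (k : ℕ) : ℕ :=
  sInf {m | k < m ∧ w.getD m true = false ∧ IsDyck ((w.drop (k + 1)).take (m - (k + 1)))}

/-- The distance function `D_w(i)`: number of letters between the `i`-th up step and its
matching down step, plus one. -/
noncomputable def distFn (w : List Bool) (i : ℕ) : ℕ :=
  matchIdx w (upPos w i) - upPos w i

/-- One rotation step of the Tamari order on Dyck words: a factor `d · B` (with `B` a
nonempty Dyck word) is replaced by `B · d`. -/
def TamariStep (P Q : List Bool) : Prop :=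
  ∃ A B C : List Bool, IsDyck B ∧ B ≠ [] ∧
    P = A ++ false :: (B ++ C) ∧ Q = A ++ (B ++ false :: C)

/-- The Tamari order on Dyck words: reflexive-transitive closure of rotation steps. -/
def TamariLe : List Bool → List Bool → Prop := Relation.ReflTransGen TamariStep
/-- The type of a Dyck word `w` of size `n`: the word of length `n - 1` over `{N, E}`
(encoded with `true = E`, `false = N`) whose `k`-th letter is `E` iff the letter following
the `k`-th up step of `w` is an up step. -/
noncomputable def typeWord (w : List Bool) : List Bool :=
  (List.range (w.count true - 1)).map (fun k => w.getD (upPos w (k + 1) + 1) false)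

/-- A synchronized interval: a pair of Dyck words of the same size, comparable in the
Tamari order, and with the same type. -/
def Sync (P Q : List Bool) : Prop :=
  IsDyck P ∧ IsDyck Q ∧ P.length = Q.length ∧ TamariLe P Q ∧ typeWord P = typeWord Q
/-- A rooted plane tree whose leaves carry integer labels. -/
inductive PTree : Type where
  | leaf : ℤ → PTree
  | node : List PTree → PTree

/-- The labels of the leaves of a tree, in (counterclockwise) traversal order. -/
def leavesOf : PTree → List ℤ
  | .leaf a => [a]
  | .node [] => []
  | .node (c :: cs) => leavesOf c ++ leavesOf (.node cs)

/-- The number of edges of a tree (internal and external), the root being a node. -/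
def numEdges : PTree → ℕ
  | .leaf _ => 0
  | .node [] => 0
  | .node (c :: cs) => 1 + numEdges c + numEdges (.node cs)

/-- The number of non-root internal nodes of a tree. -/
def internalCount : PTree → ℕ
  | .leaf _ => 0
  | .node [] => 0
  | .node (c :: cs) =>
      (match c with | .node _ => 1 | .leaf _ => 0) + internalCount c + internalCount (.node cs)

/-- The three conditions of decorated trees, for a subtree rooted at depth `d`:
(1) a leaf whose parent has depth `p` has label `≥ -1` and `< p`;
(2) every internal node of depth `d > 0` has a descendant leaf with label `≤ d - 2`;
(3) if a leaf of a subtree rooted at a child of a node of depth `d` has label `d`, then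
all leaves of that subtree preceding it in traversal order have labels `≥ d`. -/
def Cond : PTree → ℕ → Prop
  | .leaf a, d => -1 ≤ a ∧ a + 1 < (d : ℤ)
  | .node cs, d =>
      (0 < d → ∃ a ∈ leavesOf (.node cs), a ≤ (d : ℤ) - 2) ∧
      (∀ c ∈ cs, ∀ i j : ℕ, i < j → j < (leavesOf c).length →
        (leavesOf c).getD j 0 = (d : ℤ) → (d : ℤ) ≤ (leavesOf c).getD i 0) ∧
      (∀ c ∈ cs, Cond c (d + 1))

/-- A decorated tree: a rooted plane tree (rooted at an internal node) with integer
labels on leaves satisfying the three conditions. -/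
def IsDecorated (T : PTree) : Prop :=
  (∃ cs, T = PTree.node cs) ∧ Cond T 0

mutual
/-- The list of charges of the leaves of a subtree rooted at depth `d`, in traversal
order: every leaf starts with charge `0`, and each internal node of depth `d > 0` adds
one charge to its first descendant leaf with label `≤ d - 2`. -/
def chargeList : PTree → ℕ → List ℕ
  | .leaf _, _ => [0]
  | .node cs, d =>
      let base := chargeConcat cs (d + 1)
      if d = 0 then base
      else
        let i := (leavesOf (.node cs)).findIdx (fun a => decide (a ≤ (d : ℤ) - 2))
        base.set i (base.getD i 0 + 1)

/-- Charges of a forest of subtrees, all rooted at depth `d`. -/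
def chargeConcat : List PTree → ℕ → List ℕ
  | [], _ => []
  | c :: cs, d => chargeList c d ++ chargeConcat cs d
end

/-- Builds the lower path `P(T)` by traversal, consuming the list of leaf charges:
each edge contributes an up step `u = true` when first visited, and a leaf of charge `k`
contributes `u·d^(1+k)`. Returns the word and the unconsumed charges. -/
def buildP : PTree → List ℕ → List Bool × List ℕ
  | .leaf _, ks => (List.replicate (ks.headD 0 + 1) false, ks.tail)
  | .node [], ks => ([], ks)
  | .node (c :: cs), ks =>
      let r1 := buildP c ks
      let r2 := buildP (.node cs) r1.2
      (true :: (r1.1 ++ r2.1), r2.2)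

/-- The lower Dyck path `P(T)` of a decorated tree, via the charge construction. -/
def Pword (T : PTree) : List Bool := (buildP T (chargeList T 0)).1

/-- The upper Dyck path `Q(T)`: the depth evolution of the traversal of `T`
(`true` = down an edge, `false` = up an edge). -/
def Qword : PTree → List Bool
  | .leaf _ => []
  | .node [] => []
  | .node (c :: cs) => (true :: (Qword c ++ [false])) ++ Qword (.node cs)

/-!
`Q(T)` is the contour word of `T`, and a Dyck word factors uniquely at its first return, so
`Q(T)` determines the shape of `T` (a leaf and a childless node have the same contour, but by
condition (2) the only childless node of a decorated tree is its root). Along a fixed shape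
`P(T)` determines the charges of the leaves. Finally the charges determine the labels: let `j`
be the first leaf where the labels `a₁ < a₂` of two trees of the same shape differ. An ancestor
that charges leaf `j` in the second tree also charges it in the first, while the ancestor of
depth `a₂ + 1` charges it in the first tree only, because condition (3) forces the leaves before
`j` in its subtree to have labels `≥ a₂`. So leaf `j` carries more charge in the first tree.
-/

theorem List.getD_set_getD_add_one {l : List ℕ} {i j : ℕ} (hj : j < l.length) :
    (l.set i (l.getD i 0 + 1)).getD j 0 = l.getD j 0 + if i = j then 1 else 0 := by
  split_ifs with hij
  · subst hij
    simp [List.getElem?_set_self hj]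
  · simp [List.getElem?_set_ne hij]

theorem List.getD_eq_of_take_eq {α : Type*} {l1 l2 : List α} {i j : ℕ} (d : α)
    (h : l1.take j = l2.take j) (hi : i < j) : l1.getD i d = l2.getD i d := by
  have := congrArg (fun l => l.getD i d) h
  simpa [List.getD_eq_getElem?_getD, List.getElem?_take, hi] using this

theorem List.take_eq_take_of_append {α : Type*} {A1 A2 B1 B2 : List α} {j : ℕ}
    (hA : A1.length = A2.length) (h : (A1 ++ B1).take j = (A2 ++ B2).take j) :
    A1.take j = A2.take j ∧ B1.take (j - A1.length) = B2.take (j - A1.length) := by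
  rw [List.take_append, List.take_append, ← hA] at h
  exact List.append_inj h (by simp [hA])

theorem List.findIdx_lt_eq_iff {l : List ℤ} {t : ℤ} {j : ℕ} (hj : j < l.length) :
    l.findIdx (fun a => decide (a < t)) = j ↔ l.getD j 0 < t ∧ ∀ i < j, t ≤ l.getD i 0 := by
  rw [List.findIdx_eq hj]
  simp only [decide_eq_true_eq, decide_eq_false_iff_not, not_lt, List.getD_eq_getElem _ _ hj]
  exact and_congr_right fun _ => forall₂_congr fun i hi => by
    rw [List.getD_eq_getElem _ _ (hi.trans hj)]

theorem List.findIdx_lt_eq_of_take_eq {l1 l2 : List ℤ} {t : ℤ} {j : ℕ}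
    (hj1 : j < l1.length) (hj2 : j < l2.length) (hpre : l1.take j = l2.take j)
    (hle : l1.getD j 0 ≤ l2.getD j 0) (h : l2.findIdx (fun a => decide (a < t)) = j) :
    l1.findIdx (fun a => decide (a < t)) = j := by
  rw [List.findIdx_lt_eq_iff hj2] at h
  rw [List.findIdx_lt_eq_iff hj1]
  exact ⟨hle.trans_lt h.1, fun i hi => (List.getD_eq_of_take_eq 0 hpre hi).symm ▸ h.2 i hi⟩

theorem List.exists_take_eq_getD_ne {l1 l2 : List ℤ} (hlen : l1.length = l2.length)
    (hne : l1 ≠ l2) :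
    ∃ j < l1.length, l1.take j = l2.take j ∧ l1.getD j 0 ≠ l2.getD j 0 := by
  induction l1 generalizing l2 with
  | nil => exact absurd (List.eq_nil_of_length_eq_zero hlen.symm).symm hne
  | cons a l1 ih =>
    obtain _ | ⟨b, l2⟩ := l2
    · simp at hlen
    by_cases hab : a = b
    · subst hab
      obtain ⟨j, hj, hpre, hj'⟩ := ih (by simpa using hlen) (by simpa using hne)
      exact ⟨j + 1, by simpa using hj, by simpa using hpre, by simpa using hj'⟩
    · exact ⟨0, by simp, rfl, by simpa using hab⟩

theorem ite_one_zero_mono {P Q : Prop} [Decidable P] [Decidable Q] (h : P → Q) :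
    (if P then 1 else 0 : ℕ) ≤ if Q then 1 else 0 := by
  split_ifs <;> simp_all

theorem replicate_false_append_inj {k1 k2 : ℕ} {r1 r2 : List Bool}
    (hr1 : r1.head? ≠ some false) (hr2 : r2.head? ≠ some false)
    (h : List.replicate k1 false ++ r1 = List.replicate k2 false ++ r2) : k1 = k2 ∧ r1 = r2 := by
  induction k1 generalizing k2 with
  | zero =>
    cases k2 with
    | zero => simpa using h
    | succ k2 =>
      simp only [List.replicate, List.nil_append, List.cons_append] at h
      simp [h] at hr1
  | succ k1 ih =>
    cases k2 with
    | zero =>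
      simp only [List.replicate, List.nil_append, List.cons_append] at h
      simp [← h] at hr2
    | succ k2 =>
      simp only [List.replicate_succ, List.cons_append, List.cons.injEq, true_and] at h
      exact (ih h).imp (congrArg (· + 1)) id

theorem IsDyck.nil : IsDyck [] := by simp [IsDyck]

theorem IsDyck.append {A B : List Bool} (hA : IsDyck A) (hB : IsDyck B) : IsDyck (A ++ B) := by
  refine ⟨by simp [List.count_append, hA.1, hB.1], fun k => ?_⟩
  simp only [List.take_append, List.count_append]
  exact Nat.add_le_add (hA.2 k) (hB.2 _)

theorem IsDyck.bracket {w : List Bool} (hw : IsDyck w) : IsDyck (true :: (w ++ [false])) := by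
  refine ⟨by simp [List.count_append, hw.1], fun k => ?_⟩
  cases k with
  | zero => simp
  | succ k =>
    have hfalse : ([false].take (k - w.length)).count false ≤ 1 :=
      List.count_le_length.trans (by simp)
    have htrue : ([false].take (k - w.length)).count true = 0 := by
      simp [List.count_eq_zero, List.mem_take_iff_getElem]
    simp only [List.take_succ_cons, List.count_cons, List.take_append, List.count_append, htrue,
      beq_false, Bool.not_true, Bool.false_eq_true, ↓reduceIte, add_zero, BEq.rfl]
    have := hw.2 k
    omega

theorem IsDyck.eq_of_append_false_eq {A B X Y : List Bool} (hA : IsDyck A) (hB : IsDyck B)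
    (h : A ++ false :: X = B ++ false :: Y) : A = B ∧ X = Y := by
  -- a Dyck word followed by a down step is not a prefix of another Dyck word
  have not_lt : ∀ {A B X Y : List Bool}, IsDyck A → IsDyck B →
      A ++ false :: X = B ++ false :: Y → ¬ A.length < B.length := by
    intro A B X Y hA hB h hlt
    have hpre : B.take (A.length + 1) = A ++ [false] := by
      have := congrArg (List.take (A.length + 1)) h
      rwa [List.take_append_of_le_length hlt, List.take_append, List.take_of_length_le (by omega),
        Nat.add_sub_cancel_left, eq_comm] at this
    have := hB.2 (A.length + 1)
    rw [hpre, List.count_append, List.count_append, hA.1] at this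
    simp at this
  obtain hlt | heq | hgt := Nat.lt_trichotomy A.length B.length
  · exact absurd hlt (not_lt hA hB h)
  · obtain ⟨rfl, hXY⟩ := List.append_inj h heq
    exact ⟨rfl, List.cons.inj hXY |>.2⟩
  · exact absurd hgt (not_lt hB hA h.symm)

theorem leavesOf_node_cons (c : PTree) (cs : List PTree) :
    leavesOf (.node (c :: cs)) = leavesOf c ++ leavesOf (.node cs) := by
  rw [leavesOf]

theorem mem_leavesOf_node {a : ℤ} {cs : List PTree} :
    a ∈ leavesOf (.node cs) ↔ ∃ c ∈ cs, a ∈ leavesOf c := by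
  induction cs with
  | nil => simp [leavesOf]
  | cons c cs ih => simp [leavesOf_node_cons, ih]

inductive SameShape : PTree → PTree → Prop
  | leaf (a b : ℤ) : SameShape (.leaf a) (.leaf b)
  | nil : SameShape (.node []) (.node [])
  | cons {c c' : PTree} {cs cs' : List PTree} :
      SameShape c c' → SameShape (.node cs) (.node cs') →
        SameShape (.node (c :: cs)) (.node (c' :: cs'))

namespace SameShape

theorem symm {T1 T2 : PTree} (h : SameShape T1 T2) : SameShape T2 T1 := by
  induction h with
  | leaf a b => exact .leaf b a
  | nil => exact .nil
  | cons _ _ ih1 ih2 => exact .cons ih1 ih2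

theorem length_leavesOf_eq {T1 T2 : PTree} (h : SameShape T1 T2) :
    (leavesOf T1).length = (leavesOf T2).length := by
  induction h with
  | leaf a b => simp [leavesOf]
  | nil => rfl
  | cons _ _ ih1 ih2 => simp only [leavesOf, List.length_append, ih1, ih2]

theorem eq_of_leavesOf_eq {T1 T2 : PTree} (h : SameShape T1 T2)
    (hl : leavesOf T1 = leavesOf T2) : T1 = T2 := by
  induction h with
  | leaf a b => simpa [leavesOf] using hl
  | nil => rfl
  | cons hc _ ih1 ih2 =>
    simp only [leavesOf] at hl
    obtain ⟨h1, h2⟩ := List.append_inj hl hc.length_leavesOf_eq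
    rw [ih1 h1, PTree.node.inj (ih2 h2)]

end SameShape

inductive NonemptyNodes : PTree → Prop
  | leaf (a : ℤ) : NonemptyNodes (.leaf a)
  | node {cs : List PTree} :
      cs ≠ [] → (∀ c ∈ cs, NonemptyNodes c) → NonemptyNodes (.node cs)

theorem nonemptyNodes_of_cond : ∀ (T : PTree) {d : ℕ}, 0 < d → Cond T d → NonemptyNodes T
  | .leaf a, _, _, _ => .leaf a
  | .node cs, d, hd, hC => by
    rw [Cond] at hC
    obtain ⟨hlow, -, hchildren⟩ := hC
    refine .node ?_ fun c hc => nonemptyNodes_of_cond c (Nat.succ_pos d) (hchildren c hc)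
    rintro rfl
    obtain ⟨a, ha, -⟩ := hlow hd
    simp [leavesOf] at ha

theorem neg_one_le_of_mem_leavesOf : ∀ (T : PTree) {d : ℕ} {a : ℤ}, Cond T d →
    a ∈ leavesOf T → -1 ≤ a
  | .leaf b, _, _, hC, ha => by
    rw [leavesOf, List.mem_singleton] at ha
    rw [Cond] at hC
    exact ha ▸ hC.1
  | .node cs, _, _, hC, ha => by
    obtain ⟨c, hc, ha⟩ := mem_leavesOf_node.1 ha
    rw [Cond] at hC
    have hsize := List.sizeOf_lt_of_mem hc
    exact neg_one_le_of_mem_leavesOf c (hC.2.2 c hc) ha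
termination_by T => sizeOf T

theorem isDyck_Qword : ∀ T : PTree, IsDyck (Qword T)
  | .leaf _ => by rw [Qword]; exact .nil
  | .node [] => by rw [Qword]; exact .nil
  | .node (c :: cs) => by
    rw [Qword]
    exact (isDyck_Qword c).bracket.append (isDyck_Qword (.node cs))
termination_by T => sizeOf T

theorem Qword_node_cons_ne_nil (c : PTree) (cs : List PTree) : Qword (.node (c :: cs)) ≠ [] := by
  simp [Qword]

theorem Qword_leaf_ne {a : ℤ} {cs : List PTree} (hn : NonemptyNodes (.node cs)) :
    Qword (.leaf a) ≠ Qword (.node cs) := by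
  rcases hn with _ | ⟨hne, -⟩
  obtain ⟨c, cs, rfl⟩ := List.exists_cons_of_ne_nil hne
  simp [Qword]

theorem Qword_eq_of_node_cons {c1 c2 : PTree} {cs1 cs2 : List PTree}
    (h : Qword (.node (c1 :: cs1)) = Qword (.node (c2 :: cs2))) :
    Qword c1 = Qword c2 ∧ Qword (.node cs1) = Qword (.node cs2) := by
  simp only [Qword, List.cons_append, List.cons.injEq, true_and, List.append_assoc] at h
  exact (isDyck_Qword c1).eq_of_append_false_eq (isDyck_Qword c2) h

theorem sameShape_of_Qword_eq : ∀ {cs1 cs2 : List PTree}, (∀ c ∈ cs1, NonemptyNodes c) →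
    (∀ c ∈ cs2, NonemptyNodes c) → Qword (.node cs1) = Qword (.node cs2) →
    SameShape (.node cs1) (.node cs2)
  | [], [], _, _, _ => .nil
  | [], c :: cs, _, _, h => absurd (h.symm.trans (by rw [Qword])) (Qword_node_cons_ne_nil c cs)
  | c :: cs, [], _, _, h => absurd (h.trans (by rw [Qword])) (Qword_node_cons_ne_nil c cs)
  | c1 :: cs1, c2 :: cs2, hn1, hn2, h => by
    have tail := sameShape_of_Qword_eq (fun c hc => hn1 c (.tail _ hc))
      (fun c hc => hn2 c (.tail _ hc)) (Qword_eq_of_node_cons h).2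
    have hc := (Qword_eq_of_node_cons h).1
    match c1, c2, hn1 c1 (.head _), hn2 c2 (.head _) with
    | .leaf a, .leaf b, _, _ => exact .cons (.leaf a b) tail
    | .node ds1, .node ds2, .node _ hds1, .node _ hds2 =>
      exact .cons (sameShape_of_Qword_eq hds1 hds2 hc) tail
    | .leaf _, .node _, _, hn => exact absurd hc (Qword_leaf_ne hn)
    | .node _, .leaf _, hn, _ => exact absurd hc.symm (Qword_leaf_ne hn)
termination_by cs1 => sizeOf cs1

theorem buildP_snd : ∀ (T : PTree) (ks : List ℕ), (buildP T ks).2 = ks.drop (leavesOf T).length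
  | .leaf a, ks => by simp [buildP, leavesOf, List.drop_one]
  | .node [], ks => by simp [buildP, leavesOf]
  | .node (c :: cs), ks => by
    rw [buildP, buildP_snd (.node cs), buildP_snd c, List.drop_drop, leavesOf,
      List.length_append]
termination_by T => sizeOf T

theorem buildP_node_append_head? (cs : List PTree) (ks : List ℕ) {r : List Bool}
    (hr : r.head? ≠ some false) : ((buildP (.node cs) ks).1 ++ r).head? ≠ some false := by
  cases cs with
  | nil => simpa [buildP] using hr
  | cons c cs => simp [buildP]

theorem SameShape.take_eq_of_buildP_append_eq {T1 T2 : PTree} (hs : SameShape T1 T2)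
    {ks1 ks2 : List ℕ} {r1 r2 : List Bool} (hk1 : (leavesOf T1).length ≤ ks1.length)
    (hk2 : (leavesOf T1).length ≤ ks2.length)
    (hr1 : r1.head? ≠ some false) (hr2 : r2.head? ≠ some false)
    (h : (buildP T1 ks1).1 ++ r1 = (buildP T2 ks2).1 ++ r2) :
    ks1.take (leavesOf T1).length = ks2.take (leavesOf T1).length ∧ r1 = r2 := by
  induction hs generalizing ks1 ks2 r1 r2 with
  | leaf a b =>
    obtain _ | ⟨k1, ks1⟩ := ks1
    · simp [leavesOf] at hk1
    obtain _ | ⟨k2, ks2⟩ := ks2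
    · simp [leavesOf] at hk2
    simp only [buildP, List.headD_cons] at h
    obtain ⟨hk, hr⟩ := replicate_false_append_inj hr1 hr2 h
    simp [leavesOf, Nat.succ_injective hk, hr]
  | nil => simpa [buildP, leavesOf] using h
  | @cons c1 c2 cs1 cs2 hc hcs ihc ihcs =>
    simp only [buildP, List.cons_append, List.cons.injEq, true_and, List.append_assoc,
      buildP_snd] at h
    simp only [leavesOf, List.length_append] at hk1 hk2 ⊢
    obtain ⟨hhead, hrest⟩ := ihc (by omega) (by omega) (buildP_node_append_head? _ _ hr1)
      (buildP_node_append_head? _ _ hr2) h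
    rw [← hc.length_leavesOf_eq] at hrest
    obtain ⟨htail, hr⟩ := ihcs (by rw [List.length_drop]; omega)
      (by rw [List.length_drop]; omega) hr1 hr2 hrest
    refine ⟨?_, hr⟩
    rw [List.take_add, List.take_add, hhead, htail]

mutual
theorem length_chargeList : ∀ (T : PTree) (d : ℕ), (chargeList T d).length = (leavesOf T).length
  | .leaf a, d => by simp [chargeList, leavesOf]
  | .node cs, d => by
    rw [chargeList]
    split <;> simp [length_chargeConcat]
theorem length_chargeConcat : ∀ (cs : List PTree) (d : ℕ),
    (chargeConcat cs d).length = (leavesOf (.node cs)).length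
  | [], d => by simp [chargeConcat, leavesOf]
  | c :: cs, d => by
    simp [chargeConcat, leavesOf, length_chargeList c, length_chargeConcat cs]
end

theorem SameShape.chargeList_eq_of_Pword_eq {T1 T2 : PTree} (hs : SameShape T1 T2)
    (h : Pword T1 = Pword T2) : chargeList T1 0 = chargeList T2 0 := by
  have hlen1 := length_chargeList T1 0
  have hlen2 := (length_chargeList T2 0).trans hs.length_leavesOf_eq.symm
  have := (hs.take_eq_of_buildP_append_eq hlen1.ge hlen2.ge (r1 := []) (r2 := []) (by simp)
    (by simp) (by simpa [Pword] using h)).1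
  rwa [← hlen1, List.take_length, hlen1, ← hlen2, List.take_length] at this

theorem chargeList_succ_getD (cs : List PTree) (p : ℕ) {j : ℕ}
    (hj : j < (leavesOf (.node cs)).length) :
    (chargeList (.node cs) (p + 1)).getD j 0 = (chargeConcat cs (p + 2)).getD j 0 +
      if (leavesOf (.node cs)).findIdx (fun a => decide (a < (p : ℤ))) = j then 1 else 0 := by
  have hthr :
      (fun a : ℤ => decide (a ≤ ((p + 1 : ℕ) : ℤ) - 2)) = fun a => decide (a < (p : ℤ)) := by
    funext a; simp only [decide_eq_decide]; omega
  rw [chargeList, if_neg (Nat.succ_ne_zero p)]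
  simp only [hthr]
  exact List.getD_set_getD_add_one (by rwa [length_chargeConcat])

theorem chargeConcat_cons_getD_left {c : PTree} {cs : List PTree} {d j : ℕ}
    (hj : j < (leavesOf c).length) :
    (chargeConcat (c :: cs) d).getD j 0 = (chargeList c d).getD j 0 := by
  rw [chargeConcat, List.getD_append _ _ _ _ (by rwa [length_chargeList])]

theorem chargeConcat_cons_getD_right {c : PTree} {cs : List PTree} {d j : ℕ}
    (hj : (leavesOf c).length ≤ j) :
    (chargeConcat (c :: cs) d).getD j 0 = (chargeConcat cs d).getD (j - (leavesOf c).length) 0 := by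
  rw [chargeConcat, List.getD_append_right _ _ _ _ (by rwa [length_chargeList]),
    length_chargeList]

mutual
theorem chargeList_getD_le : ∀ (T1 T2 : PTree), SameShape T1 T2 → ∀ (p : ℕ) {j : ℕ},
    j < (leavesOf T1).length → (leavesOf T1).take j = (leavesOf T2).take j →
    (leavesOf T1).getD j 0 ≤ (leavesOf T2).getD j 0 →
    (chargeList T2 (p + 1)).getD j 0 ≤ (chargeList T1 (p + 1)).getD j 0
  | .leaf _, .leaf _, _, _, _, _, _, _ => by simp [chargeList]
  | .node cs1, .node cs2, hs, p, j, hj, hpre, hle => by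
    have hj2 : j < (leavesOf (.node cs2)).length := hs.length_leavesOf_eq ▸ hj
    rw [chargeList_succ_getD cs1 p hj, chargeList_succ_getD cs2 p hj2]
    exact Nat.add_le_add (chargeConcat_getD_le cs1 cs2 hs (p + 1) hj hpre hle)
      (ite_one_zero_mono (List.findIdx_lt_eq_of_take_eq hj hj2 hpre hle))
  | .leaf _, .node _, hs, _, _, _, _, _ => nomatch hs
  | .node _, .leaf _, hs, _, _, _, _, _ => nomatch hs

theorem chargeConcat_getD_le : ∀ (cs1 cs2 : List PTree), SameShape (.node cs1) (.node cs2) →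
    ∀ (p : ℕ) {j : ℕ}, j < (leavesOf (.node cs1)).length →
    (leavesOf (.node cs1)).take j = (leavesOf (.node cs2)).take j →
    (leavesOf (.node cs1)).getD j 0 ≤ (leavesOf (.node cs2)).getD j 0 →
    (chargeConcat cs2 (p + 1)).getD j 0 ≤ (chargeConcat cs1 (p + 1)).getD j 0
  | [], _, _, _, j, hj, _, _ => by simp [leavesOf] at hj
  | c1 :: cs1, c2 :: cs2, .cons hc hcs, p, j, hj, hpre, hle => by
    have hlen := hc.length_leavesOf_eq
    simp only [leavesOf_node_cons] at hj hpre hle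
    obtain ⟨hpre1, hpre2⟩ := List.take_eq_take_of_append hlen hpre
    by_cases hjc : j < (leavesOf c1).length
    · rw [chargeConcat_cons_getD_left hjc, chargeConcat_cons_getD_left (hlen ▸ hjc)]
      rw [List.getD_append _ _ _ _ hjc, List.getD_append _ _ _ _ (hlen ▸ hjc)] at hle
      exact chargeList_getD_le c1 c2 hc p hjc hpre1 hle
    · rw [not_lt] at hjc
      rw [chargeConcat_cons_getD_right hjc, chargeConcat_cons_getD_right (hlen ▸ hjc), ← hlen]
      rw [List.getD_append_right _ _ _ _ hjc, List.getD_append_right _ _ _ _ (hlen ▸ hjc),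
        ← hlen] at hle
      rw [List.length_append] at hj
      exact chargeConcat_getD_le cs1 cs2 hcs p (by omega) hpre2 hle
end

mutual
theorem chargeList_getD_lt : ∀ (T1 T2 : PTree), SameShape T1 T2 → ∀ {p j : ℕ},
    Cond T2 (p + 1) → j < (leavesOf T1).length → (leavesOf T1).take j = (leavesOf T2).take j →
    (leavesOf T1).getD j 0 < (leavesOf T2).getD j 0 → (p : ℤ) ≤ (leavesOf T2).getD j 0 →
    ((leavesOf T2).getD j 0 = p → ∀ i < j, (p : ℤ) ≤ (leavesOf T2).getD i 0) →
    (chargeList T2 (p + 1)).getD j 0 < (chargeList T1 (p + 1)).getD j 0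
  | .leaf a, .leaf b, _, p, j, hC, hj, _, _, hp, _ => by
    rw [Cond] at hC
    simp only [leavesOf, List.length_singleton, Nat.lt_one_iff] at hj hp
    subst hj
    rw [List.getD_cons_zero] at hp
    omega
  | .node cs1, .node cs2, hs, p, j, hC, hj, hpre, hlt, hp, hprefix => by
    rw [Cond] at hC
    obtain ⟨-, hC3, hCc⟩ := hC
    have hj2 : j < (leavesOf (.node cs2)).length := hs.length_leavesOf_eq ▸ hj
    rw [chargeList_succ_getD cs1 p hj, chargeList_succ_getD cs2 p hj2]
    rcases hp.eq_or_lt with hpeq | hplt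
    · -- the node of depth `p + 1` charges leaf `j` in `T1` but not in `T2`
      have h1 : (leavesOf (.node cs1)).findIdx (fun a => decide (a < (p : ℤ))) = j :=
        (List.findIdx_lt_eq_iff hj).2 ⟨by omega, fun i hi =>
          (List.getD_eq_of_take_eq 0 hpre hi) ▸ hprefix hpeq.symm i hi⟩
      have h2 : (leavesOf (.node cs2)).findIdx (fun a => decide (a < (p : ℤ))) ≠ j :=
        fun h => by have := ((List.findIdx_lt_eq_iff hj2).1 h).1; omega
      rw [if_pos h1, if_neg h2]
      exact Nat.lt_succ_of_le (chargeConcat_getD_le cs1 cs2 hs (p + 1) hj hpre hlt.le)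
    · refine Nat.add_lt_add_of_lt_of_le
        (chargeConcat_getD_lt cs1 cs2 hs hCc hC3 hj hpre hlt (by omega)) ?_
      exact ite_one_zero_mono (List.findIdx_lt_eq_of_take_eq hj hj2 hpre hlt.le)
  | .leaf _, .node _, hs, _, _, _, _, _, _, _, _ => nomatch hs
  | .node _, .leaf _, hs, _, _, _, _, _, _, _, _ => nomatch hs

theorem chargeConcat_getD_lt : ∀ (cs1 cs2 : List PTree), SameShape (.node cs1) (.node cs2) →
    ∀ {p j : ℕ}, (∀ c ∈ cs2, Cond c (p + 1)) →
    (∀ c ∈ cs2, ∀ i j : ℕ, i < j → j < (leavesOf c).length →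
      (leavesOf c).getD j 0 = (p : ℤ) → (p : ℤ) ≤ (leavesOf c).getD i 0) →
    j < (leavesOf (.node cs1)).length →
    (leavesOf (.node cs1)).take j = (leavesOf (.node cs2)).take j →
    (leavesOf (.node cs1)).getD j 0 < (leavesOf (.node cs2)).getD j 0 →
    (p : ℤ) ≤ (leavesOf (.node cs2)).getD j 0 →
    (chargeConcat cs2 (p + 1)).getD j 0 < (chargeConcat cs1 (p + 1)).getD j 0
  | [], _, _, _, j, _, _, hj, _, _, _ => by simp [leavesOf] at hj
  | c1 :: cs1, c2 :: cs2, .cons hc hcs, p, j, hCc, hC3, hj, hpre, hlt, hp => by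
    have hlen := hc.length_leavesOf_eq
    simp only [leavesOf_node_cons] at hj hpre hlt hp
    obtain ⟨hpre1, hpre2⟩ := List.take_eq_take_of_append hlen hpre
    by_cases hjc : j < (leavesOf c1).length
    · rw [chargeConcat_cons_getD_left hjc, chargeConcat_cons_getD_left (hlen ▸ hjc)]
      rw [List.getD_append _ _ _ _ hjc, List.getD_append _ _ _ _ (hlen ▸ hjc)] at hlt
      rw [List.getD_append _ _ _ _ (hlen ▸ hjc)] at hp
      exact chargeList_getD_lt c1 c2 hc (hCc c2 (.head _)) hjc hpre1 hlt hp
        fun h i hi => hC3 c2 (.head _) i j hi (hlen ▸ hjc) h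
    · rw [not_lt] at hjc
      rw [chargeConcat_cons_getD_right hjc, chargeConcat_cons_getD_right (hlen ▸ hjc), ← hlen]
      rw [List.getD_append_right _ _ _ _ hjc, List.getD_append_right _ _ _ _ (hlen ▸ hjc),
        ← hlen] at hlt
      rw [List.getD_append_right _ _ _ _ (hlen ▸ hjc), ← hlen] at hp
      rw [List.length_append] at hj
      exact chargeConcat_getD_lt cs1 cs2 hcs (fun c hc => hCc c (.tail _ hc))
        (fun c hc => hC3 c (.tail _ hc)) (by omega) hpre2 hlt hp
end

theorem chargeList_zero_getD_lt {cs1 cs2 : List PTree}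
    (hs : SameShape (.node cs1) (.node cs2)) (h1 : Cond (.node cs1) 0) (h2 : Cond (.node cs2) 0)
    {j : ℕ} (hj : j < (leavesOf (.node cs1)).length)
    (hpre : (leavesOf (.node cs1)).take j = (leavesOf (.node cs2)).take j)
    (hlt : (leavesOf (.node cs1)).getD j 0 < (leavesOf (.node cs2)).getD j 0) :
    (chargeList (.node cs2) 0).getD j 0 < (chargeList (.node cs1) 0).getD j 0 := by
  have hmin : -1 ≤ (leavesOf (.node cs1)).getD j 0 :=
    neg_one_le_of_mem_leavesOf _ h1 (List.getD_eq_getElem _ _ hj ▸ List.getElem_mem hj)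
  rw [Cond] at h2
  simp only [chargeList]
  exact chargeConcat_getD_lt cs1 cs2 hs h2.2.2 h2.2.1 hj hpre hlt (by push_cast; omega)

theorem SameShape.leavesOf_eq_of_chargeList_eq {cs1 cs2 : List PTree}
    (hs : SameShape (.node cs1) (.node cs2)) (h1 : Cond (.node cs1) 0) (h2 : Cond (.node cs2) 0)
    (h : chargeList (.node cs1) 0 = chargeList (.node cs2) 0) :
    leavesOf (.node cs1) = leavesOf (.node cs2) := by
  by_contra hne
  obtain ⟨j, hj, hpre, hdiff⟩ := List.exists_take_eq_getD_ne hs.length_leavesOf_eq hne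
  rcases hdiff.lt_or_gt with hlt | hlt
  · exact (chargeList_zero_getD_lt hs h1 h2 hj hpre hlt).ne (by rw [h])
  · exact (chargeList_zero_getD_lt hs.symm h2 h1 (hs.length_leavesOf_eq ▸ hj) hpre.symm hlt).ne
      (by rw [h])

/-- The map `T ↦ [P(T), Q(T)]` on decorated trees is injective. -/
theorem Pword_Qword_injective (T1 T2 : PTree)
    (h1 : IsDecorated T1) (h2 : IsDecorated T2)
    (hP : Pword T1 = Pword T2) (hQ : Qword T1 = Qword T2) :
    T1 = T2 := by
  obtain ⟨⟨cs1, rfl⟩, hC1⟩ := h1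
  obtain ⟨⟨cs2, rfl⟩, hC2⟩ := h2
  have children_nonempty {cs : List PTree} (hC : Cond (.node cs) 0) :
      ∀ c ∈ cs, NonemptyNodes c := by
    rw [Cond] at hC
    exact fun c hc => nonemptyNodes_of_cond c Nat.one_pos (hC.2.2 c hc)
  have hs := sameShape_of_Qword_eq (children_nonempty hC1) (children_nonempty hC2) hQ
  exact hs.eq_of_leavesOf_eq
    (hs.leavesOf_eq_of_chargeList_eq hC1 hC2 (hs.chargeList_eq_of_Pword_eq hP))
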